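/- For every s ≥ 0, ||Q_{2^s}||² = ∫ (Q_{2^s})² dμ = (1 − 2γ_{s+1})·r_s²/4; equivalently, Q_{2^{s+1}} = (Q_{2^s})² − ||Q_{2^s}||². -/

import Mathlib

open Polynomial MeasureTheory Filter

/-- `r γ s` : the recursively defined scales `r 0 = 1`, `r (s+1) = γ (s+1) * (r s)²`. -/
noncomputable def r (γ : ℕ → ℝ) : ℕ → ℝ
  | 0 => 1
  | s + 1 => γ (s + 1) * (r γ s) ^ 2

/-- `P γ s` : the polynomial `P_{2^s}`, with `P_1 = X - 1` and
`P_{2^{s+1}} = P_{2^s} · (P_{2^s} + r_s)`. -/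
noncomputable def P (γ : ℕ → ℝ) : ℕ → Polynomial ℝ
  | 0 => X - 1
  | s + 1 => P γ s * (P γ s + C (r γ s))

/-- The integral `∫ f dν_s` of a function `f` against the normalized counting measure `ν_s`
on the `2^s` (simple, real) zeros of `P_{2^s} + r_s/2`. -/
noncomputable def nuInt (γ : ℕ → ℝ) (s : ℕ) (f : ℝ → ℝ) : ℝ :=
  (((P γ s + C (r γ s / 2)).roots.map f).sum) / 2 ^ s

/-!
Write `T_s = P_{2^s} + r_s/2`. Since `P_{2^{s+1}} + y = (P_{2^s} + y₁)(P_{2^s} + y₂)` with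
`y₁ + y₂ = r_s`, `y₁ y₂ = y`, and `P_{2^s} = -yᵢ` on the zeros of the factors, reducing a polynomial
`c` of degree `< 2^{s+1}` modulo `P_{2^s}` shows that `∑ c` over the zeros of `P_{2^{s+1}} + y` does
not depend on `y ∈ (0, r_{s+1}]`. Hence `∫ c dν_s` is eventually constant, so it equals `∫ c dμ`
once `2^s > deg c`, and the same computation gives `∫ T_s p dμ = 0` for `deg p < 2^s`. Thus
`Q_{2^s} = T_s`, and `T_s² = T_{s+1} + r_s²/4 - r_{s+1}/2` yields both claims.
-/

section RootSum

variable {R : Type*} [CommRing R] [IsDomain R]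

noncomputable def rootSum (f c : R[X]) : R := (f.roots.map fun x => c.eval x).sum

lemma rootSum_mul {f g : R[X]} (hfg : f * g ≠ 0) (c : R[X]) :
    rootSum (f * g) c = rootSum f c + rootSum g c := by
  simp only [rootSum, roots_mul hfg, Multiset.map_add, Multiset.sum_add]

lemma rootSum_C_mul (f : R[X]) (k : R) (c : R[X]) : rootSum f (C k * c) = k * rootSum f c := by
  simp only [rootSum, eval_mul, eval_C, Multiset.sum_map_mul_left]

lemma rootSum_zero_right (f : R[X]) : rootSum f 0 = 0 := by
  simp [rootSum]

/-- On the roots of `q + C z` the polynomial `q` takes the value `-z`. -/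
lemma rootSum_add_C (q : R[X]) (z : R) (c : R[X]) :
    rootSum (q + C z) c = rootSum (q + C z) (c %ₘ q) - z * rootSum (q + C z) (c /ₘ q) := by
  have key : ∀ x ∈ (q + C z).roots, c.eval x = (c %ₘ q).eval x - z * (c /ₘ q).eval x := by
    intro x hx
    have hqx : q.eval x = -z := by
      simpa [IsRoot, eq_neg_iff_add_eq_zero] using (mem_roots'.1 hx).2
    conv_lhs => rw [← modByMonic_add_div c q]
    rw [eval_add, eval_mul, hqx]
    ring
  rw [rootSum, Multiset.map_congr rfl key, Multiset.sum_map_sub, Multiset.sum_map_mul_left]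
  rfl

end RootSum

lemma exists_add_eq_mul_eq {a b : ℝ} (h : 4 * b ≤ a ^ 2) :
    ∃ y₁ y₂ : ℝ, y₁ + y₂ = a ∧ y₁ * y₂ = b := by
  refine ⟨(a - √(a ^ 2 - 4 * b)) / 2, (a + √(a ^ 2 - 4 * b)) / 2, by ring, ?_⟩
  linear_combination (-1 / 4 : ℝ) * Real.sq_sqrt (sub_nonneg.2 h)

theorem eq_of_monic_of_orthogonal {μ : Measure ℝ}
    (hμint : ∀ p : ℝ[X], Integrable (fun x => p.eval x) μ)
    (hμpos : ∀ p : ℝ[X], p ≠ 0 → 0 < ∫ x, (p.eval x) ^ 2 ∂μ)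
    {n : ℕ} {Q T : ℝ[X]} (hQ : Q.Monic) (hT : T.Monic) (hQn : Q.natDegree = n)
    (hTn : T.natDegree = n)
    (hQo : ∀ p : ℝ[X], p.degree < (n : WithBot ℕ) → ∫ x, Q.eval x * p.eval x ∂μ = 0)
    (hTo : ∀ p : ℝ[X], p.degree < (n : WithBot ℕ) → ∫ x, T.eval x * p.eval x ∂μ = 0) :
    Q = T := by
  have hdeg : (Q - T).degree < n := by
    have hQT : Q.degree = T.degree := by
      rw [degree_eq_natDegree hQ.ne_zero, degree_eq_natDegree hT.ne_zero, hQn, hTn]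
    simpa [degree_eq_natDegree hQ.ne_zero, hQn] using
      degree_sub_lt_left hQT hQ.ne_zero (by rw [hQ.leadingCoeff, hT.leadingCoeff])
  have hint : ∀ f : ℝ[X], Integrable (fun x => f.eval x * (Q - T).eval x) μ := fun f => by
    simpa only [eval_mul] using hμint (f * (Q - T))
  have hsq : ∫ x, ((Q - T).eval x) ^ 2 ∂μ = 0 := by
    have hsplit : (fun x => ((Q - T).eval x) ^ 2) =
        fun x => Q.eval x * (Q - T).eval x - T.eval x * (Q - T).eval x := by
      funext x
      rw [eval_sub]
      ring
    rw [hsplit, integral_sub (hint Q) (hint T), hQo _ hdeg, hTo _ hdeg, sub_zero]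
  by_contra hne
  exact (hμpos _ (sub_ne_zero.2 hne)).ne' hsq

section Cantor

variable {γ : ℕ → ℝ}

lemma r_pos (hγ : ∀ s, 0 < γ (s + 1)) : ∀ s, 0 < r γ s
  | 0 => one_pos
  | s + 1 => mul_pos (hγ s) (pow_pos (r_pos hγ s) 2)

lemma r_succ_le (hγ : ∀ s, γ (s + 1) < 1 / 4) (s : ℕ) : r γ (s + 1) ≤ r γ s ^ 2 / 4 := by
  rw [r]
  nlinarith [hγ s, sq_nonneg (r γ s)]

variable (γ) in
lemma natDegree_P : ∀ s, (P γ s).natDegree = 2 ^ s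
  | 0 => natDegree_X_sub_C 1
  | s + 1 => by
    have hne : ∀ a, P γ s + C a ≠ 0 := fun a =>
      ne_zero_of_natDegree_gt (n := 0) (by rw [natDegree_add_C, natDegree_P s]; positivity)
    rw [P, natDegree_mul (by simpa using hne 0) (hne _), natDegree_add_C, natDegree_P s, pow_succ]
    ring

variable (γ) in
lemma degree_C_lt_degree_P (s : ℕ) (a : ℝ) : (C a).degree < (P γ s).degree :=
  degree_C_le.trans_lt (natDegree_pos_iff_degree_pos.1 (by rw [natDegree_P]; positivity))

variable (γ) in
lemma monic_P : ∀ s, (P γ s).Monic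
  | 0 => monic_X_sub_C 1
  | s + 1 => (monic_P s).mul ((monic_P s).add_of_left (degree_C_lt_degree_P γ s _))

variable (γ) in
lemma monic_P_add_C (s : ℕ) (a : ℝ) : (P γ s + C a).Monic :=
  (monic_P γ s).add_of_left (degree_C_lt_degree_P γ s a)

variable (γ) in
noncomputable def shiftedP (s : ℕ) : ℝ[X] := P γ s + C (r γ s / 2)

lemma rootSum_P_zero_add_C (y : ℝ) {c : ℝ[X]} (hc : c.natDegree < 2 ^ 0) :
    rootSum (P γ 0 + C y) c = c.coeff 0 := by
  have hP : P γ 0 + C y = X - C (1 - y) := by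
    rw [P, C_sub, C_1]
    ring
  rw [rootSum, hP, roots_X_sub_C, Multiset.map_singleton, Multiset.sum_singleton,
    eq_C_of_natDegree_eq_zero (Nat.lt_one_iff.1 hc), eval_C, coeff_C_zero]

/-- `γ_{s+1} < 1/4` gives `4y ≤ r_s²`, so `P_{2^{s+1}} + y = (P_{2^s} + y₁)(P_{2^s} + y₂)` with
real `y₁, y₂ ∈ (0, r_s]`, to which the hypothesis at level `s` applies. -/
lemma rootSum_P_succ_add_C (hγ : ∀ s : ℕ, 0 < γ (s + 1) ∧ γ (s + 1) < 1 / 4) (s : ℕ)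
    (hind : ∀ y ∈ Set.Ioc 0 (r γ s), ∀ c : ℝ[X], c.natDegree < 2 ^ s →
      rootSum (P γ s + C y) c = rootSum (shiftedP γ s) c)
    {y : ℝ} (hy : y ∈ Set.Ioc 0 (r γ (s + 1))) {c : ℝ[X]} (hc : c.natDegree < 2 ^ (s + 1)) :
    rootSum (P γ (s + 1) + C y) c =
      2 * rootSum (shiftedP γ s) (c %ₘ P γ s) - r γ s * rootSum (shiftedP γ s) (c /ₘ P γ s) := by
  have hr := r_pos (fun s => (hγ s).1) s
  obtain ⟨y₁, y₂, hsum, hprod⟩ := exists_add_eq_mul_eq (a := r γ s) (b := y)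
    (by linarith [hy.2, r_succ_le (fun s => (hγ s).2) s])
  have hy₁ : y₁ ∈ Set.Ioc 0 (r γ s) := by
    constructor <;> nlinarith [hy.1]
  have hy₂ : y₂ ∈ Set.Ioc 0 (r γ s) := by
    constructor <;> nlinarith [hy.1]
  have hfac : P γ (s + 1) + C y = (P γ s + C y₁) * (P γ s + C y₂) := by
    rw [P, ← hsum, ← hprod, C_add, C_mul]
    ring
  have hmod : (c %ₘ P γ s).natDegree < 2 ^ s := by
    have hP1 : P γ s ≠ 1 := fun h => by simpa [h] using (natDegree_P γ s).symm
    simpa [natDegree_P] using natDegree_modByMonic_lt c (monic_P γ s) hP1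
  have hdiv : (c /ₘ P γ s).natDegree < 2 ^ s := by
    rw [natDegree_divByMonic c (monic_P γ s), natDegree_P, pow_succ] at *
    omega
  have hfactor : ∀ z ∈ Set.Ioc 0 (r γ s), rootSum (P γ s + C z) c =
      rootSum (shiftedP γ s) (c %ₘ P γ s) - z * rootSum (shiftedP γ s) (c /ₘ P γ s) :=
    fun z hz => by rw [rootSum_add_C, hind z hz _ hmod, hind z hz _ hdiv]
  rw [hfac, rootSum_mul ((monic_P_add_C γ s y₁).mul (monic_P_add_C γ s y₂)).ne_zero,
    hfactor y₁ hy₁, hfactor y₂ hy₂, ← hsum]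
  ring

lemma rootSum_P_add_C (hγ : ∀ s : ℕ, 0 < γ (s + 1) ∧ γ (s + 1) < 1 / 4) :
    ∀ s, ∀ y ∈ Set.Ioc 0 (r γ s), ∀ c : ℝ[X], c.natDegree < 2 ^ s →
      rootSum (P γ s + C y) c = rootSum (shiftedP γ s) c
  | 0, y, _, c, hc => by rw [shiftedP, rootSum_P_zero_add_C y hc, rootSum_P_zero_add_C _ hc]
  | s + 1, y, hy, c, hc => by
    have hr := r_pos (fun s => (hγ s).1) (s + 1)
    rw [shiftedP, rootSum_P_succ_add_C hγ s (rootSum_P_add_C hγ s) hy hc,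
      rootSum_P_succ_add_C hγ s (rootSum_P_add_C hγ s) ⟨half_pos hr, half_le_self hr.le⟩ hc]

lemma rootSum_shiftedP_succ (hγ : ∀ s : ℕ, 0 < γ (s + 1) ∧ γ (s + 1) < 1 / 4) (s : ℕ)
    {c : ℝ[X]} (hc : c.natDegree < 2 ^ (s + 1)) :
    rootSum (shiftedP γ (s + 1)) c =
      2 * rootSum (shiftedP γ s) (c %ₘ P γ s) - r γ s * rootSum (shiftedP γ s) (c /ₘ P γ s) := by
  have hr := r_pos (fun s => (hγ s).1) (s + 1)
  exact rootSum_P_succ_add_C hγ s (rootSum_P_add_C hγ s) ⟨half_pos hr, half_le_self hr.le⟩ hc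

lemma nuInt_eq_rootSum (s : ℕ) (c : ℝ[X]) :
    nuInt γ s (fun x => c.eval x) = rootSum (shiftedP γ s) c / 2 ^ s :=
  rfl

lemma nuInt_succ (hγ : ∀ s : ℕ, 0 < γ (s + 1) ∧ γ (s + 1) < 1 / 4) {s : ℕ} {c : ℝ[X]}
    (hc : c.natDegree < 2 ^ s) :
    nuInt γ (s + 1) (fun x => c.eval x) = nuInt γ s (fun x => c.eval x) := by
  have hlt : c.degree < (P γ s).degree :=
    degree_le_natDegree.trans_lt <| by
      rw [degree_eq_natDegree (monic_P γ s).ne_zero, natDegree_P]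
      exact_mod_cast hc
  rw [nuInt_eq_rootSum, nuInt_eq_rootSum,
    rootSum_shiftedP_succ hγ s (hc.trans (Nat.pow_lt_pow_succ one_lt_two)),
    (modByMonic_eq_self_iff (monic_P γ s)).2 hlt, (divByMonic_eq_zero_iff (monic_P γ s)).2 hlt,
    rootSum_zero_right, pow_succ]
  field_simp
  ring

variable (γ) in
lemma shiftedP_sq (s : ℕ) :
    shiftedP γ s ^ 2 = shiftedP γ (s + 1) + C (r γ s ^ 2 / 4 - r γ (s + 1) / 2) := by
  have hr : C (r γ s) = 2 * C (r γ s / 2) := by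
    rw [← map_ofNat C 2, ← C_mul, mul_div_cancel₀ _ two_ne_zero]
  have hconst :
      C (r γ s ^ 2 / 4 - r γ (s + 1) / 2) = C (r γ s / 2) ^ 2 - C (r γ (s + 1) / 2) := by
    rw [← C_pow, ← C_sub]
    ring_nf
  rw [shiftedP, shiftedP, hconst, P, hr]
  ring

section Measure

variable {μ : Measure ℝ}

lemma integral_eq_nuInt (hγ : ∀ s : ℕ, 0 < γ (s + 1) ∧ γ (s + 1) < 1 / 4)
    (hμconv : ∀ p : ℝ[X],
      Tendsto (fun s => nuInt γ s (fun x => p.eval x)) atTop (nhds (∫ x, p.eval x ∂μ)))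
    {t : ℕ} {c : ℝ[X]} (hc : c.natDegree < 2 ^ t) :
    ∫ x, c.eval x ∂μ = nuInt γ t (fun x => c.eval x) := by
  have hconst : ∀ u ≥ t, nuInt γ u (fun x => c.eval x) = nuInt γ t (fun x => c.eval x) := by
    intro u hu
    induction u, hu using Nat.le_induction with
    | base => rfl
    | succ u hu ih => rw [nuInt_succ hγ (hc.trans_le (Nat.pow_le_pow_right two_pos hu)), ih]
  exact tendsto_nhds_unique (hμconv c)
    (tendsto_const_nhds.congr' (eventually_atTop.2 ⟨t, fun u hu => (hconst u hu).symm⟩))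

lemma integral_shiftedP_mul (hγ : ∀ s : ℕ, 0 < γ (s + 1) ∧ γ (s + 1) < 1 / 4)
    (hμconv : ∀ p : ℝ[X],
      Tendsto (fun s => nuInt γ s (fun x => p.eval x)) atTop (nhds (∫ x, p.eval x ∂μ)))
    (t : ℕ) {p : ℝ[X]} (hp : p.degree < ((2 ^ t : ℕ) : WithBot ℕ)) :
    ∫ x, (shiftedP γ t).eval x * p.eval x ∂μ = 0 := by
  have hpt : p.degree < (P γ t).degree := by
    rwa [degree_eq_natDegree (monic_P γ t).ne_zero, natDegree_P]
  have hdm := div_modByMonic_unique (f := shiftedP γ t * p) p (C (r γ t / 2) * p) (monic_P γ t)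
    ⟨by rw [shiftedP]; ring, by
      rw [← smul_eq_C_mul]
      exact (degree_smul_le _ _).trans_lt hpt⟩
  have hpn : p.natDegree < 2 ^ t := by
    rcases eq_or_ne p 0 with rfl | hp0
    · simp
    · exact (natDegree_lt_iff_degree_lt hp0).2 hp
  have hdeg : (shiftedP γ t * p).natDegree < 2 ^ (t + 1) :=
    natDegree_mul_le.trans_lt (by rw [shiftedP, natDegree_add_C, natDegree_P, pow_succ]; omega)
  simp_rw [← eval_mul]
  rw [integral_eq_nuInt hγ hμconv hdeg, nuInt_eq_rootSum, rootSum_shiftedP_succ hγ t hdeg,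
    hdm.1, hdm.2, rootSum_C_mul]
  ring

lemma integral_shiftedP_sq [IsProbabilityMeasure μ]
    (hγ : ∀ s : ℕ, 0 < γ (s + 1) ∧ γ (s + 1) < 1 / 4)
    (hμint : ∀ p : ℝ[X], Integrable (fun x => p.eval x) μ)
    (hμconv : ∀ p : ℝ[X],
      Tendsto (fun s => nuInt γ s (fun x => p.eval x)) atTop (nhds (∫ x, p.eval x ∂μ)))
    (s : ℕ) :
    ∫ x, ((shiftedP γ s).eval x) ^ 2 ∂μ = r γ s ^ 2 / 4 - r γ (s + 1) / 2 := by
  have hmean : ∫ x, (shiftedP γ (s + 1)).eval x ∂μ = 0 := by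
    simpa using integral_shiftedP_mul hγ hμconv (s + 1) (p := 1) (by simp)
  simp_rw [← eval_pow, shiftedP_sq, eval_add, eval_C]
  rw [integral_add (hμint _) (integrable_const _), hmean, integral_const]
  simp

end Measure

theorem stmt_6 (γ : ℕ → ℝ) (hγ : ∀ s : ℕ, 0 < γ (s + 1) ∧ γ (s + 1) < 1 / 4)
    (μ : Measure ℝ) [IsProbabilityMeasure μ]
    (hμint : ∀ p : Polynomial ℝ, Integrable (fun x => p.eval x) μ)
    (hμpos : ∀ p : Polynomial ℝ, p ≠ 0 → 0 < ∫ x, (p.eval x) ^ 2 ∂μ)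
    (hμconv : ∀ p : Polynomial ℝ,
      Tendsto (fun s => nuInt γ s (fun x => p.eval x)) atTop (nhds (∫ x, p.eval x ∂μ)))
    (Q : ℕ → Polynomial ℝ) (hQmonic : ∀ n, (Q n).Monic) (hQdeg : ∀ n, (Q n).natDegree = n)
    (hQorth : ∀ n : ℕ, ∀ p : Polynomial ℝ, p.degree < (n : WithBot ℕ) →
      ∫ x, (Q n).eval x * p.eval x ∂μ = 0)
    (s : ℕ) :
    ∫ x, ((Q (2 ^ s)).eval x) ^ 2 ∂μ = (1 - 2 * γ (s + 1)) * (r γ s) ^ 2 / 4 ∧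
    Q (2 ^ (s + 1)) = (Q (2 ^ s)) ^ 2 - C (∫ x, ((Q (2 ^ s)).eval x) ^ 2 ∂μ) := by
  have hQ : ∀ t, Q (2 ^ t) = shiftedP γ t := fun t =>
    eq_of_monic_of_orthogonal hμint hμpos (hQmonic _) (monic_P_add_C γ t _) (hQdeg _)
      (natDegree_add_C.trans (natDegree_P γ t)) (hQorth _)
      (fun _ hp => integral_shiftedP_mul hγ hμconv t hp)
  have hnorm : ∫ x, ((Q (2 ^ s)).eval x) ^ 2 ∂μ = r γ s ^ 2 / 4 - r γ (s + 1) / 2 := by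
    rw [hQ, integral_shiftedP_sq hγ hμint hμconv]
  refine ⟨by rw [hnorm, r]; ring, ?_⟩
  rw [hnorm, hQ, hQ, shiftedP_sq]
  simp
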